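/- arXiv:1911.05807 — 2 statements merged into one kernel-verified Lean document; each statement's English description precedes it below -/
import Mathlib

section
/- Let M, K be nonsingular real m×m matrices, β > 0, A = [[2βM, 0, -M], [0, M, K^T], [-M, K, 0]], P = [[0, K, 0], [0, M, K^T], [-M, K, 0]]. If λ ≠ 1 and w = (x; y; z) is a nonzero vector with A w = λ P w, then z ≠ 0, y = -M^{-1}K^T z, x = -M^{-1} K M^{-1} K^T z, and (2β I + K^{-T} M K^{-1} M) z = λ z. -/
open Matrix

/-- A 3×3 block matrix with square m×m blocks. -/
def blk3 {R : Type*} (m : ℕ)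
    (A B C D E F G H I : Matrix (Fin m) (Fin m) R) :
    Matrix (Fin m ⊕ (Fin m ⊕ Fin m)) (Fin m ⊕ (Fin m ⊕ Fin m)) R :=
  Matrix.of <|
    Sum.elim (fun i => Sum.elim (A i) (Sum.elim (B i) (C i)))
      (Sum.elim (fun i => Sum.elim (D i) (Sum.elim (E i) (F i)))
        (fun i => Sum.elim (G i) (Sum.elim (H i) (I i))))

/-- A block vector with three m-blocks. -/
def vec3 {R : Type*} {m : ℕ} (x y z : Fin m → R) : Fin m ⊕ (Fin m ⊕ Fin m) → R :=
  Sum.elim x (Sum.elim y z)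

open Matrix

lemma blk3_mulVec {m : ℕ} (A B C D E F G H I : Matrix (Fin m) (Fin m) ℂ)
    (x y z : Fin m → ℂ) :
    blk3 m A B C D E F G H I *ᵥ vec3 x y z =
      vec3 (A *ᵥ x + B *ᵥ y + C *ᵥ z) (D *ᵥ x + E *ᵥ y + F *ᵥ z)
        (G *ᵥ x + H *ᵥ y + I *ᵥ z) := by
  funext i
  rcases i with i | i | i <;>
    simp [blk3, vec3, mulVec, dotProduct, Fintype.sum_sum_type, add_assoc]

lemma inv_mulVec_cancel {m : ℕ} (A : Matrix (Fin m) (Fin m) ℂ) (hA : IsUnit A)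
    (v : Fin m → ℂ) : A⁻¹ *ᵥ (A *ᵥ v) = v := by
  rw [mulVec_mulVec, Matrix.nonsing_inv_mul _ ((Matrix.isUnit_iff_isUnit_det A).mp hA),
    one_mulVec]

theorem stmt_2 {m : ℕ} (M K : Matrix (Fin m) (Fin m) ℝ)
    (hM : IsUnit M) (hK : IsUnit K) (β : ℝ) (hβ : 0 < β)
    (Mc : Matrix (Fin m) (Fin m) ℂ) (hMc : Mc = M.map Complex.ofReal)
    (Kc : Matrix (Fin m) (Fin m) ℂ) (hKc : Kc = K.map Complex.ofReal)
    (A P : Matrix (Fin m ⊕ (Fin m ⊕ Fin m)) (Fin m ⊕ (Fin m ⊕ Fin m)) ℂ)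
    (hA : A = blk3 m ((2 * (β : ℂ)) • Mc) 0 (-Mc) 0 Mc Kcᵀ (-Mc) Kc 0)
    (hP : P = blk3 m 0 Kc 0 0 Mc Kcᵀ (-Mc) Kc 0)
    (lam : ℂ) (hlam : lam ≠ 1) (x y z : Fin m → ℂ)
    (hw0 : vec3 x y z ≠ 0)
    (heig : A *ᵥ vec3 x y z = lam • (P *ᵥ vec3 x y z)) :
    z ≠ 0 ∧ y = -(Mc⁻¹ *ᵥ (Kcᵀ *ᵥ z)) ∧
      x = -(Mc⁻¹ *ᵥ (Kc *ᵥ (Mc⁻¹ *ᵥ (Kcᵀ *ᵥ z)))) ∧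
      ((2 * (β : ℂ)) • (1 : Matrix (Fin m) (Fin m) ℂ) + (Kcᵀ)⁻¹ * Mc * Kc⁻¹ * Mc) *ᵥ z
        = lam • z := by
  have hMcU : IsUnit Mc := by
    rw [hMc]
    exact hM.map (Complex.ofRealHom.mapMatrix)
  have hKcU : IsUnit Kc := by
    rw [hKc]
    exact hK.map (Complex.ofRealHom.mapMatrix)
  have hKcTU : IsUnit Kcᵀ := by
    rw [Matrix.isUnit_iff_isUnit_det, Matrix.det_transpose,
      ← Matrix.isUnit_iff_isUnit_det]
    exact hKcU
  rw [hA, hP, blk3_mulVec, blk3_mulVec] at heig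
  have h1 : (2 * (β : ℂ)) • (Mc *ᵥ x) - Mc *ᵥ z = lam • (Kc *ᵥ y) := by
    funext i
    have h := congrFun heig (Sum.inl i)
    simpa [vec3, smul_mulVec, neg_mulVec, sub_eq_add_neg] using h
  have h2 : Mc *ᵥ y + Kcᵀ *ᵥ z = lam • (Mc *ᵥ y + Kcᵀ *ᵥ z) := by
    funext i
    have h := congrFun heig (Sum.inr (Sum.inl i))
    simpa [vec3] using h
  have h3 : -(Mc *ᵥ x) + Kc *ᵥ y = lam • (-(Mc *ᵥ x) + Kc *ᵥ y) := by
    funext i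
    have h := congrFun heig (Sum.inr (Sum.inr i))
    simpa [vec3, neg_mulVec] using h
  have hlam' : (1 : ℂ) - lam ≠ 0 := sub_ne_zero.mpr (Ne.symm hlam)
  have h2' : Mc *ᵥ y + Kcᵀ *ᵥ z = 0 := by
    have : (1 - lam) • (Mc *ᵥ y + Kcᵀ *ᵥ z) = 0 := by
      rw [sub_smul, one_smul, ← h2, sub_self]
    rcases smul_eq_zero.mp this with h | h
    · exact absurd h hlam'
    · exact h
  have h3' : Mc *ᵥ x = Kc *ᵥ y := by
    have : (1 - lam) • (-(Mc *ᵥ x) + Kc *ᵥ y) = 0 := by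
      rw [sub_smul, one_smul, ← h3, sub_self]
    rcases smul_eq_zero.mp this with h | h
    · exact absurd h hlam'
    · linear_combination (norm := module) -h
  have hMy : Mc *ᵥ y = -(Kcᵀ *ᵥ z) := by
    linear_combination (norm := module) h2'
  have hy : y = -(Mc⁻¹ *ᵥ (Kcᵀ *ᵥ z)) := by
    have := congrArg (fun v => Mc⁻¹ *ᵥ v) hMy
    simpa [inv_mulVec_cancel Mc hMcU, mulVec_neg] using this
  have hx : x = -(Mc⁻¹ *ᵥ (Kc *ᵥ (Mc⁻¹ *ᵥ (Kcᵀ *ᵥ z)))) := by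
    have := congrArg (fun v => Mc⁻¹ *ᵥ v) h3'
    simp only [inv_mulVec_cancel Mc hMcU] at this
    rw [this, hy]
    simp [mulVec_neg]
  -- from row 1: Mc *ᵥ z = (2β - lam) • (Mc *ᵥ x)
  have hz : z = (2 * (β : ℂ) - lam) • x := by
    have hMz : Mc *ᵥ z = (2 * (β : ℂ) - lam) • (Mc *ᵥ x) := by
      rw [← h3'] at h1
      linear_combination (norm := module) -h1
    have := congrArg (fun v => Mc⁻¹ *ᵥ v) hMz
    simpa [inv_mulVec_cancel Mc hMcU, mulVec_smul] using this
  have hzne : z ≠ 0 := by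
    intro hz0
    apply hw0
    have hy0 : y = 0 := by simp [hy, hz0]
    have hx0 : x = 0 := by simp [hx, hz0]
    funext i
    rcases i with i | i | i <;> simp [vec3, hx0, hy0, hz0]
  refine ⟨hzne, hy, hx, ?_⟩
  -- compute the final eigen-equation
  have key : (Kcᵀ⁻¹ * Mc * Kc⁻¹ * Mc) *ᵥ z = (lam - 2 * (β : ℂ)) • z := by
    have e1 : Mc *ᵥ z = (2 * (β : ℂ) - lam) • (Kc *ᵥ y) := by
      rw [hz, mulVec_smul, h3']
    have e2 : Kc⁻¹ *ᵥ (Mc *ᵥ z) = (2 * (β : ℂ) - lam) • y := by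
      rw [e1, mulVec_smul, inv_mulVec_cancel Kc hKcU]
    have e3 : Mc *ᵥ (Kc⁻¹ *ᵥ (Mc *ᵥ z)) = (2 * (β : ℂ) - lam) • -(Kcᵀ *ᵥ z) := by
      rw [e2, mulVec_smul, hMy]
    have e4 : Kcᵀ⁻¹ *ᵥ (Mc *ᵥ (Kc⁻¹ *ᵥ (Mc *ᵥ z))) = (2 * (β : ℂ) - lam) • -z := by
      rw [e3, mulVec_smul, mulVec_neg, inv_mulVec_cancel Kcᵀ hKcTU]
    calc (Kcᵀ⁻¹ * Mc * Kc⁻¹ * Mc) *ᵥ z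
        = Kcᵀ⁻¹ *ᵥ (Mc *ᵥ (Kc⁻¹ *ᵥ (Mc *ᵥ z))) := by
          simp [mulVec_mulVec, Matrix.mul_assoc]
      _ = (2 * (β : ℂ) - lam) • -z := e4
      _ = (lam - 2 * (β : ℂ)) • z := by
          rw [smul_neg, ← neg_smul, neg_sub]
  rw [add_mulVec, key, smul_mulVec, one_mulVec]
  linear_combination (norm := module)
end

section
/- Let M, K be nonsingular real m×m matrices and β > 0. The 3m×3m saddle-point matrix A = [[2βM, 0, -M], [0, M, K^T], [-M, K, 0]] is nonsingular. -/
/-!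
For a kernel vector `(x, y, z)` the three block rows say `M z = 2β M x`, `M y = -Kᵀ z` and
`K y = M x`. Pairing the second with `y` and substituting the other two (using `Mᵀ = M`) gives
`yᵀ M y = -2β xᵀ M x ≤ 0`, so `y = 0` by positive definiteness; then `M x = K y = 0` and
`M z = 2β M x = 0` force `x = z = 0`.
-/

open Matrix

section BlockVectors

variable {R : Type*} {m : ℕ}

theorem exists_vec3_eq (v : Fin m ⊕ (Fin m ⊕ Fin m) → R) : ∃ x y z, vec3 x y z = v :=
  ⟨v ∘ Sum.inl, v ∘ Sum.inr ∘ Sum.inl, v ∘ Sum.inr ∘ Sum.inr, by ext (i | i | i) <;> rfl⟩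

theorem vec3_eq_zero_iff [Zero R] {x y z : Fin m → R} :
    vec3 x y z = 0 ↔ x = 0 ∧ y = 0 ∧ z = 0 := by
  simp only [vec3, ← Sum.elim_zero_zero, Sum.elim_eq_iff]

theorem blk3_mulVec_vec3 [NonUnitalNonAssocSemiring R]
    (A B C D E F G H I : Matrix (Fin m) (Fin m) R) (x y z : Fin m → R) :
    blk3 m A B C D E F G H I *ᵥ vec3 x y z =
      vec3 (A *ᵥ x + B *ᵥ y + C *ᵥ z) (D *ᵥ x + E *ᵥ y + F *ᵥ z)
        (G *ᵥ x + H *ᵥ y + I *ᵥ z) := by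
  funext i
  rcases i with i | i | i <;>
    simp [blk3, vec3, mulVec, dotProduct, Fintype.sum_sum_type, add_assoc]

end BlockVectors

namespace Matrix.PosDef

variable {n R : Type*} [Fintype n]

theorem eq_zero_of_mulVec_eq_zero [Ring R] [PartialOrder R] [StarRing R] {M : Matrix n n R}
    (hM : M.PosDef) {x : n → R} (hx : M *ᵥ x = 0) : x = 0 := by
  by_contra hx0
  simpa [hx] using hM.dotProduct_mulVec_pos hx0

variable [Field R] [LinearOrder R] [IsStrictOrderedRing R] [StarRing R] [TrivialStar R]

theorem eq_zero_of_saddle {M K : Matrix n n R} (hM : M.PosDef) {c : R} (hc : 0 ≤ c)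
    {x y z : n → R} (hz : M *ᵥ z = c • M *ᵥ x) (hy : M *ᵥ y + Kᵀ *ᵥ z = 0)
    (hx : K *ᵥ y = M *ᵥ x) : x = 0 ∧ y = 0 ∧ z = 0 := by
  have hMT : Mᵀ = M := by
    simpa [conjTranspose_eq_transpose_of_trivial] using hM.isHermitian.eq
  have hquad : y ⬝ᵥ M *ᵥ y = -(c * (x ⬝ᵥ M *ᵥ x)) := calc
    y ⬝ᵥ M *ᵥ y = -(y ⬝ᵥ Kᵀ *ᵥ z) := by rw [eq_neg_of_add_eq_zero_left hy, dotProduct_neg]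
    _ = -(K *ᵥ y ⬝ᵥ z) := by rw [dotProduct_mulVec, vecMul_transpose]
    _ = -(x ⬝ᵥ M *ᵥ z) := by rw [hx, dotProduct_mulVec x, ← vecMul_transpose, hMT]
    _ = -(c * (x ⬝ᵥ M *ᵥ x)) := by rw [hz, dotProduct_smul, smul_eq_mul]
  have hy0 : y = 0 := by
    by_contra hy0
    have hy_pos := hM.dotProduct_mulVec_pos hy0
    have hx_nonneg := hM.posSemidef.dotProduct_mulVec_nonneg x
    rw [star_trivial] at hy_pos hx_nonneg
    linarith [mul_nonneg hc hx_nonneg]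
  have hx0 : x = 0 := hM.eq_zero_of_mulVec_eq_zero (by rw [← hx, hy0, mulVec_zero])
  have hz0 : z = 0 := hM.eq_zero_of_mulVec_eq_zero (by rw [hz, hx0, mulVec_zero, smul_zero])
  exact ⟨hx0, hy0, hz0⟩

end Matrix.PosDef

theorem stmt_10_general {m : ℕ} (M K : Matrix (Fin m) (Fin m) ℝ)
    (hM : M.PosDef) (β : ℝ) (hβ : 0 < β) :
    IsUnit (blk3 m ((2 * β) • M) 0 (-M) 0 M Kᵀ (-M) K 0) := by
  rw [← mulVec_injective_iff_isUnit]
  refine (injective_iff_map_eq_zero (mulVecLin _)).2 fun v hv => ?_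
  obtain ⟨x, y, z, rfl⟩ := exists_vec3_eq v
  rw [mulVecLin_apply, blk3_mulVec_vec3, vec3_eq_zero_iff] at hv
  simp only [zero_mulVec, neg_mulVec, add_zero, zero_add, add_neg_eq_zero, neg_add_eq_zero,
    smul_mulVec] at hv
  obtain ⟨hz, hy, hx⟩ := hv
  exact vec3_eq_zero_iff.2 (hM.eq_zero_of_saddle (by positivity) hz.symm hy hx.symm)

theorem stmt_10 {m : ℕ} (M K : Matrix (Fin m) (Fin m) ℝ)
    (hM : M.PosDef) (hK : IsUnit K) (β : ℝ) (hβ : 0 < β) :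
    IsUnit (blk3 m ((2 * β) • M) 0 (-M) 0 M Kᵀ (-M) K 0) :=
  stmt_10_general M K hM β hβ
end
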